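/- Let K be a unital commutative ring, A an associative unital K-superalgebra free as a K-module with a basis containing the identity, and m+n ≥ 3. In any central extension τ: L̃ → st(m,n,A) with K-linear preimages F̃_ij(a) of F_ij(a) normalized so that [F̃_ik(1), F̃_kj(b)] = F̃_ij(b), the elements H̃_ij(a,b) = [F̃_ij(a), F̃_ji(b)] satisfy, for pairwise distinct i, j, k, l and homogeneous a, b, c: H̃_ij(a,b) = −(−1)^{(|i|+|j|+|a|)(|i|+|j|+|b|)} H̃_ji(b,a); [H̃_ij(a,b), F̃_ik(c)] = F̃_ik(abc); [H̃_ij(a,b), F̃_ki(c)] = −(−1)^{(|a|+|b|)(|i|+|k|+|c|)} F̃_ki(cab); [H̃_ij(a,b), F̃_kj(c)] = (−1)^{(|i|+|j|+|a|)(|i|+|j|+|b|)+(|a|+|b|)(|j|+|k|+|c|)} F̃_kj(cba); [H̃_ij(a,b), F̃_ij(c)] = F̃_ij(abc + (−1)^{|i|+|j|+|a||b|+|b||c|+|c||a|} cba); and [H̃_ij(a,b), F̃_kl(c)] = 0. -/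

import Mathlib

/-- The sign `(-1)^d` for `d : ZMod 2`, as an integer. -/
def sgn (d : ZMod 2) : ℤ := if d = 0 then 1 else -1

section Preamble

variable (K : Type*) [CommRing K]

/-- A `ℤ/2`-grading on a `K`-module `M`, turning it into a `K`-supermodule:
two graded pieces which cover `M` and intersect trivially. -/
structure SuperModuleStr (M : Type*) [AddCommGroup M] [Module K M] where
  grading : ZMod 2 → Submodule K M
  covers : ∀ x : M, ∃ x0 ∈ grading 0, ∃ x1 ∈ grading 1, x = x0 + x1
  indep : ∀ x ∈ grading 0, x ∈ grading 1 → x = 0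

/-- An (associative, unital) superalgebra structure on a `K`-algebra `A`:
a supermodule grading compatible with the multiplication and the unit. -/
structure SuperAlgStr (A : Type*) [Ring A] [Algebra K A] extends SuperModuleStr K A where
  one_mem : (1 : A) ∈ grading 0
  mul_mem : ∀ {d e : ZMod 2} {a b : A}, a ∈ grading d → b ∈ grading e → a * b ∈ grading (d + e)

/-- A Lie superalgebra structure on a `K`-module `L`: a supermodule grading together with a
bilinear bracket which is compatible with the grading and satisfies super skew-symmetry,
the super Jacobi identity, and `⁅x,x⁆ = 0` for even `x`. -/
structure LieSuperStr (L : Type*) [AddCommGroup L] [Module K L] extends SuperModuleStr K L where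
  bracket : L →ₗ[K] L →ₗ[K] L
  bracket_mem : ∀ {d e : ZMod 2} {x y : L}, x ∈ grading d → y ∈ grading e →
    bracket x y ∈ grading (d + e)
  skew : ∀ {d e : ZMod 2} (x y : L), x ∈ grading d → y ∈ grading e →
    bracket x y = -(sgn (d * e)) • bracket y x
  jacobi : ∀ {d e f : ZMod 2} (x y z : L), x ∈ grading d → y ∈ grading e → z ∈ grading f →
    sgn (d * f) • bracket (bracket x y) z + sgn (d * e) • bracket (bracket y z) x +
      sgn (e * f) • bracket (bracket z x) y = 0
  even_sq : ∀ x ∈ grading 0, bracket x x = 0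

variable {K}

/-- The parity of the index `i` in the graded index set `{1,…,m} ∪ {m+1,…,m+n}`
(written `0`-based: the first `m` indices are even, the remaining ones odd). -/
def idxdeg (m : ℕ) {N : ℕ} (i : Fin N) : ZMod 2 := if (i : ℕ) < m then 0 else 1

/-- A homomorphism of Lie superalgebras: a linear map commuting with the brackets and
preserving the gradings. -/
structure LieSuperHom {L L' : Type*} [AddCommGroup L] [Module K L]
    [AddCommGroup L'] [Module K L'] (LS : LieSuperStr K L) (LS' : LieSuperStr K L') where
  toLin : L →ₗ[K] L'
  map_bracket : ∀ x y : L, toLin (LS.bracket x y) = LS'.bracket (toLin x) (toLin y)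
  map_grading : ∀ (d : ZMod 2), ∀ x ∈ LS.grading d, toLin x ∈ LS'.grading d

/-- The Lie subalgebra (as a `K`-submodule) generated by a subset: the smallest submodule
containing the set and closed under the bracket. -/
def lieSpan {L : Type*} [AddCommGroup L] [Module K L] (LS : LieSuperStr K L) (s : Set L) :
    Submodule K L :=
  sInf {p : Submodule K L | s ⊆ p ∧ ∀ x ∈ p, ∀ y ∈ p, LS.bracket x y ∈ p}

/-- A family `F i j : A →ₗ[K] L` (used for `i ≠ j`) satisfying the defining relations of the
Steinberg Lie superalgebra `st(m,n,A)`, with `F i j a` homogeneous of degree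
`|i| + |j| + |a|`. -/
structure SteinbergFam {A L : Type*} [Ring A] [Algebra K A] [AddCommGroup L] [Module K L]
    (AS : SuperAlgStr K A) (LS : LieSuperStr K L) (m n : ℕ) where
  F : Fin (m + n) → Fin (m + n) → A →ₗ[K] L
  F_mem : ∀ {d : ZMod 2} (i j : Fin (m + n)) (a : A), i ≠ j → a ∈ AS.grading d →
    F i j a ∈ LS.grading (idxdeg m i + idxdeg m j + d)
  rel_mul : ∀ (i j k : Fin (m + n)), i ≠ j → j ≠ k → i ≠ k → ∀ a b : A,
    LS.bracket (F i j a) (F j k b) = F i k (a * b)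
  rel_zero : ∀ (i j k l : Fin (m + n)), i ≠ j → k ≠ l → j ≠ k → i ≠ l → ∀ a b : A,
    LS.bracket (F i j a) (F k l b) = 0

namespace SteinbergFam

variable {A L : Type*} [Ring A] [Algebra K A] [AddCommGroup L] [Module K L]
  {AS : SuperAlgStr K A} {LS : LieSuperStr K L} {m n : ℕ}

/-- `H_{ij}(a,b) = ⁅F_{ij}(a), F_{ji}(b)⁆`. -/
def H (S : SteinbergFam AS LS m n) (i j : Fin (m + n)) (a b : A) : L :=
  LS.bracket (S.F i j a) (S.F j i b)

/-- `h(a,b) = H_{12}(a,b) - (-1)^{|a||b|} H_{12}(1, ba)`, for `a, b` homogeneous of degrees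
`d, e` (written with `0`-based indices `0`, `1`). -/
def h (S : SteinbergFam AS LS m n) (hN : 1 < m + n) (d e : ZMod 2) (a b : A) : L :=
  S.H ⟨0, by omega⟩ ⟨1, hN⟩ a b - sgn (d * e) • S.H ⟨0, by omega⟩ ⟨1, hN⟩ 1 (b * a)

/-- `L` is generated, as a Lie superalgebra, by the elements `F i j a` (`i ≠ j`). -/
def Generates (S : SteinbergFam AS LS m n) : Prop :=
  lieSpan LS {x | ∃ i j a, i ≠ j ∧ x = S.F i j a} = ⊤

/-- The universal property of the Steinberg Lie superalgebra: `(L, F)` is initial among all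
Lie superalgebras equipped with a family satisfying the Steinberg relations.  Together with
`Generates`, this characterizes `st(m,n,A)` up to isomorphism. -/
def IsInitial (S : SteinbergFam AS LS m n) : Prop :=
  ∀ (L' : Type*) [AddCommGroup L'] [Module K L'] (LS' : LieSuperStr K L')
    (S' : SteinbergFam AS LS' m n),
    ∃! φ : LieSuperHom LS LS', ∀ i j : Fin (m + n), i ≠ j →
      ∀ a : A, φ.toLin (S.F i j a) = S'.F i j a

end SteinbergFam

/-- A surjective homomorphism of Lie superalgebras whose kernel is central. -/
def IsCentralExt {L L' : Type*} [AddCommGroup L] [Module K L] [AddCommGroup L'] [Module K L']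
    {LS' : LieSuperStr K L'} {LS : LieSuperStr K L} (τ : LieSuperHom LS' LS) : Prop :=
  Function.Surjective τ.toLin ∧ ∀ z : L', τ.toLin z = 0 → ∀ y : L', LS'.bracket z y = 0

/-- A central extension `τ : Lu → L` is universal if every central extension of `L` receives a
unique homomorphism from `Lu` over `L`. -/
def IsUniversalCentralExt {L Lu : Type*} [AddCommGroup L] [Module K L]
    [AddCommGroup Lu] [Module K Lu] {LSu : LieSuperStr K Lu} {LS : LieSuperStr K L}
    (τ : LieSuperHom LSu LS) : Prop :=
  IsCentralExt τ ∧
    ∀ (L' : Type*) [AddCommGroup L'] [Module K L'] (LS' : LieSuperStr K L')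
      (τ' : LieSuperHom LS' LS), IsCentralExt τ' →
      ∃! ψ : LieSuperHom LSu LS', ∀ x : Lu, τ'.toLin (ψ.toLin x) = τ.toLin x

/-- `A` is free as a `K`-module, with a basis containing `1`. -/
def HasBasisContainingOne (A : Type*) [Ring A] [Algebra K A] : Prop :=
  ∃ s : Set A, (1 : A) ∈ s ∧ Nonempty (Module.Basis s K A)

end Preamble


/-!
Since the kernel of `τ` is central, `⁅x, y⁆` in `L̃` depends only on `τ x`; so every bracket
`⁅⁅F̃, F̃⁆, y⁆` can be evaluated with the Steinberg relations of `st(m,n,A)`, and the super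
Jacobi identity reduces each identity to a bracket of two lifts. The crux is that the lifts
satisfy `⁅F̃_{ij}(a), F̃_{jk}(c)⁆ = F̃_{ik}(ac)` themselves. With only three indices at hand this
comes from the decomposition `H_{ij}(b,c) = H_{ik}(bc,1) ± H_{kj}(b,c)` in `st(m,n,A)`: applying
it twice to `F̃_{ik}(a)` relates `⁅F̃_{ij}(ab), F̃_{jk}(c)⁆` to `⁅F̃_{ij}(abc), F̃_{jk}(1)⁆`, and
the specializations `b = 1` and `a = c = 1`, together with the normalization
`⁅F̃_{ik}(1), F̃_{kj}(b)⁆ = F̃_{ij}(b)`, give the claim.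
-/

section Sign

theorem sgn_add (u v : ZMod 2) : sgn (u + v) = sgn u * sgn v := by
  revert u v; decide

theorem sgn_zero : sgn 0 = 1 := rfl

variable {M : Type*} [AddCommGroup M]

theorem sgn_smul_sgn_smul (u v : ZMod 2) (x : M) : sgn u • sgn v • x = sgn (u + v) • x := by
  rw [smul_smul, sgn_add]

theorem sgn_smul_sgn_smul_self (u : ZMod 2) (x : M) : sgn u • sgn u • x = x := by
  rw [sgn_smul_sgn_smul, CharTwo.add_self_eq_zero, sgn_zero, one_smul]

theorem sgn_smul_congr {u v : ZMod 2} (h : u = v) (x : M) : sgn u • x = sgn v • x := by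
  rw [h]

theorem sgn_smul_of_eq_zero {u : ZMod 2} (h : u = 0) (x : M) : sgn u • x = x := by
  rw [h, sgn_zero, one_smul]

theorem sgn_smul_eq_iff {u : ZMod 2} {x y : M} : sgn u • x = y ↔ x = sgn u • y := by
  constructor <;> rintro rfl <;> rw [sgn_smul_sgn_smul_self]

end Sign

namespace LieSuperStr

variable {K L : Type*} [CommRing K] [AddCommGroup L] [Module K L] (LS : LieSuperStr K L)
  {p q r : ZMod 2} {x y z : L}

theorem zsmul_bracket (c : ℤ) (x y : L) : LS.bracket (c • x) y = c • LS.bracket x y := by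
  rw [map_zsmul, LinearMap.smul_apply]

theorem leibniz (hx : x ∈ LS.grading p) (hy : y ∈ LS.grading q) (hz : z ∈ LS.grading r) :
    LS.bracket x (LS.bracket y z) =
      LS.bracket (LS.bracket x y) z + sgn (p * q) • LS.bracket y (LS.bracket x z) := by
  have jac := congrArg (sgn (p * r) • ·) (LS.jacobi x y z hx hy hz)
  rw [LS.skew (LS.bracket y z) x (LS.bracket_mem hy hz) hx,
    LS.skew (LS.bracket z x) y (LS.bracket_mem hz hx) hy, LS.skew z x hz hx] at jac
  simp only [map_neg, map_zsmul, smul_neg, smul_add, sgn_smul_sgn_smul, smul_zero,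
    neg_smul] at jac
  rw [show p * r + p * r = 0 by grind, show p * r + (p * q + (q + r) * p) = 0 by grind,
    show p * r + (q * r + ((r + p) * q + r * p)) = p * q by grind, sgn_zero] at jac
  linear_combination (norm := module) -jac

theorem bracket_bracket_of_jacobi_term_eq_zero (hx : x ∈ LS.grading p)
    (hy : y ∈ LS.grading q) (hz : z ∈ LS.grading r)
    (h : LS.bracket (LS.bracket z x) y = 0) :
    LS.bracket (LS.bracket x y) z = -(sgn (p * (q + r)) • LS.bracket (LS.bracket y z) x) := by
  have jac := congrArg (sgn (p * r) • ·) (LS.jacobi x y z hx hy hz)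
  simp only [h, smul_zero, add_zero, smul_add, sgn_smul_sgn_smul] at jac
  rw [show p * r + p * r = 0 by grind, show p * r + p * q = p * (q + r) by grind, sgn_zero,
    one_smul] at jac
  exact eq_neg_of_add_eq_zero_left jac

end LieSuperStr

theorem IsCentralExt.bracket_congr_left {K L L' : Type*} [CommRing K] [AddCommGroup L]
    [Module K L] [AddCommGroup L'] [Module K L'] {LS' : LieSuperStr K L'}
    {LS : LieSuperStr K L} {τ : LieSuperHom LS' LS} (hτ : IsCentralExt τ) {x x' : L'}
    (h : τ.toLin x = τ.toLin x') (y : L') : LS'.bracket x y = LS'.bracket x' y := by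
  rw [← sub_eq_zero, ← LinearMap.sub_apply, ← map_sub]
  exact hτ.2 _ (by rw [map_sub, h, sub_self]) y

namespace SteinbergFam

variable {K A L : Type*} [CommRing K] [Ring A] [Algebra K A] [AddCommGroup L] [Module K L]
  {AS : SuperAlgStr K A} {LS : LieSuperStr K L} {m n : ℕ} (S : SteinbergFam AS LS m n)

theorem H_eq_H_add_sgn_smul_H {i j k : Fin (m + n)} (hij : i ≠ j) (hjk : j ≠ k) (hik : i ≠ k)
    {e f : ZMod 2} {b c : A} (hb : b ∈ AS.grading e) (hc : c ∈ AS.grading f) :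
    S.H i j b c = S.H i k (b * c) 1 +
      sgn ((idxdeg m k + idxdeg m i) * (idxdeg m k + idxdeg m i + e + f)) • S.H k j b c := by
  have h1 := S.F_mem k i 1 hik.symm AS.one_mem
  have hji : S.F j i c = LS.bracket (S.F j k c) (S.F k i 1) := by
    rw [S.rel_mul j k i hjk hik.symm hij.symm, mul_one]
  rw [H, hji, LS.leibniz (S.F_mem i j b hij hb) (S.F_mem j k c hjk hc) h1,
    S.rel_mul i j k hij hjk hik, LS.skew _ _ (S.F_mem i j b hij hb) h1,
    S.rel_mul k i j hik.symm hij hjk.symm, one_mul, neg_smul, map_neg, map_zsmul,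
    LS.skew _ _ (S.F_mem j k c hjk hc) (S.F_mem k j b hjk.symm hb)]
  simp only [neg_smul, smul_neg, neg_neg, sgn_smul_sgn_smul]
  congr 3
  grind

end SteinbergFam

section Lift

variable {K A L Lt : Type*} [CommRing K] [Ring A] [Algebra K A] [AddCommGroup L] [Module K L]
  [AddCommGroup Lt] [Module K Lt] {AS : SuperAlgStr K A} {LS : LieSuperStr K L}
  {LSt : LieSuperStr K Lt} {m n : ℕ}

structure NormalizedLift (S : SteinbergFam AS LS m n) (τ : LieSuperHom LSt LS) where
  F : Fin (m + n) → Fin (m + n) → A →ₗ[K] Lt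
  map_F : ∀ i j : Fin (m + n), i ≠ j → ∀ a : A, τ.toLin (F i j a) = S.F i j a
  F_mem : ∀ {d : ZMod 2} (i j : Fin (m + n)) (a : A), i ≠ j → a ∈ AS.grading d →
    F i j a ∈ LSt.grading (idxdeg m i + idxdeg m j + d)
  bracket_F_one_F : ∀ i j k : Fin (m + n), i ≠ j → j ≠ k → i ≠ k → ∀ b : A,
    LSt.bracket (F i k 1) (F k j b) = F i j b

namespace NormalizedLift

variable {S : SteinbergFam AS LS m n} {τ : LieSuperHom LSt LS} (P : NormalizedLift S τ)
  {i j k : Fin (m + n)} {d e f : ZMod 2} {a b c : A}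

def H (i j : Fin (m + n)) (a b : A) : Lt := LSt.bracket (P.F i j a) (P.F j i b)

theorem H_eq_neg_sgn_smul_H (hij : i ≠ j) (ha : a ∈ AS.grading d) (hb : b ∈ AS.grading e) :
    P.H i j a b =
      -(sgn ((idxdeg m i + idxdeg m j + d) * (idxdeg m i + idxdeg m j + e))) • P.H j i b a := by
  have hb' := P.F_mem j i b hij.symm hb
  rw [add_comm (idxdeg m j)] at hb'
  rw [H, H, LSt.skew _ _ (P.F_mem i j a hij ha) hb', neg_smul]

theorem map_H (hij : i ≠ j) (a b : A) : τ.toLin (P.H i j a b) = S.H i j a b := by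
  rw [H, τ.map_bracket, P.map_F i j hij, P.map_F j i hij.symm, SteinbergFam.H]

theorem bracket_bracket_F_F_eq_zero (hτ : IsCentralExt τ) {l : Fin (m + n)} (hij : i ≠ j)
    (hkl : k ≠ l) (hjk : j ≠ k) (hil : i ≠ l) (a b : A) (w : Lt) :
    LSt.bracket (LSt.bracket (P.F i j a) (P.F k l b)) w = 0 :=
  hτ.2 _ (by rw [τ.map_bracket, P.map_F i j hij, P.map_F k l hkl,
    S.rel_zero i j k l hij hkl hjk hil]) w

theorem bracket_bracket_F_F (hτ : IsCentralExt τ) (hij : i ≠ j) (hjk : j ≠ k) (hik : i ≠ k)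
    (a b : A) (w : Lt) :
    LSt.bracket (LSt.bracket (P.F i j a) (P.F j k b)) w = LSt.bracket (P.F i k (a * b)) w :=
  hτ.bracket_congr_left (by rw [τ.map_bracket, P.map_F i j hij, P.map_F j k hjk,
    P.map_F i k hik, S.rel_mul i j k hij hjk hik]) w

theorem bracket_H_eq_add (hτ : IsCentralExt τ) (hij : i ≠ j) (hjk : j ≠ k) (hik : i ≠ k)
    (hb : b ∈ AS.grading e) (hc : c ∈ AS.grading f) (w : Lt) :
    LSt.bracket (P.H i j b c) w = LSt.bracket (P.H i k (b * c) 1) w +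
      sgn ((idxdeg m k + idxdeg m i) * (idxdeg m k + idxdeg m i + e + f)) •
        LSt.bracket (P.H k j b c) w := by
  rw [← LSt.zsmul_bracket, ← LinearMap.add_apply, ← map_add]
  refine hτ.bracket_congr_left ?_ w
  rw [map_add, map_zsmul, P.map_H hij, P.map_H hik, P.map_H hjk.symm,
    S.H_eq_H_add_sgn_smul_H hij hjk hik hb hc]

theorem bracket_H_F_ik_eq_bracket (hτ : IsCentralExt τ) (hij : i ≠ j) (hjk : j ≠ k)
    (hik : i ≠ k) (ha : a ∈ AS.grading d) (hb : b ∈ AS.grading e) (hc : c ∈ AS.grading f) :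
    LSt.bracket (P.H i j a b) (P.F i k c) = LSt.bracket (P.F i j a) (P.F j k (b * c)) := by
  have hF := P.F_mem i j a hij ha
  rw [H, LSt.bracket_bracket_of_jacobi_term_eq_zero hF (P.F_mem j i b hij.symm hb)
      (P.F_mem i k c hik hc) (P.bracket_bracket_F_F_eq_zero hτ hik hij hik.symm hij c a _),
    P.bracket_bracket_F_F hτ hij.symm hik hjk,
    LSt.skew _ _ (P.F_mem j k (b * c) hjk (AS.mul_mem hb hc)) hF]
  simp only [neg_smul, smul_neg, neg_neg, sgn_smul_sgn_smul]
  exact sgn_smul_of_eq_zero (by grind) _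

theorem bracket_H_F_ki_eq_bracket (hτ : IsCentralExt τ) (hij : i ≠ j) (hjk : j ≠ k)
    (hik : i ≠ k) (ha : a ∈ AS.grading d) (hb : b ∈ AS.grading e) (hc : c ∈ AS.grading f) :
    LSt.bracket (P.H i j a b) (P.F k i c) =
      -(sgn ((d + e) * (idxdeg m i + idxdeg m k + f)) •
        LSt.bracket (P.F k j (c * a)) (P.F j i b)) := by
  have jac := LSt.bracket_bracket_of_jacobi_term_eq_zero (P.F_mem k i c hik.symm hc)
    (P.F_mem i j a hij ha) (P.F_mem j i b hij.symm hb)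
    (P.bracket_bracket_F_F_eq_zero hτ hij.symm hik.symm hik hij.symm b c _)
  rw [P.bracket_bracket_F_F hτ hik.symm hij hjk.symm] at jac
  rw [H, jac, smul_neg, neg_neg, sgn_smul_sgn_smul]
  exact (sgn_smul_of_eq_zero (by grind) _).symm

theorem bracket_F_mul_F (hτ : IsCentralExt τ) (hij : i ≠ j) (hjk : j ≠ k) (hik : i ≠ k)
    (ha : a ∈ AS.grading d) (hb : b ∈ AS.grading e) (hc : c ∈ AS.grading f) :
    LSt.bracket (P.F i j (a * b)) (P.F j k c) =
      LSt.bracket (P.F i j (a * (b * c))) (P.F j k 1) +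
        sgn ((idxdeg m j + idxdeg m k) * (idxdeg m j + idxdeg m k + (e + f)) +
          (idxdeg m i + idxdeg m j) * (idxdeg m i + idxdeg m j + (e + f)) +
          (e + f) * (idxdeg m i + idxdeg m k + d)) • P.F i k (b * c * a) -
        sgn ((idxdeg m i + idxdeg m k) * (idxdeg m i + idxdeg m k + (e + f)) +
          (e + f) * (idxdeg m i + idxdeg m k + d)) •
          LSt.bracket (P.F i j b) (P.F j k (c * a)) := by
  have hbc := AS.mul_mem hb hc
  -- expand `⁅H̃_{kj}(b,c), F̃_{ik}(a)⁆`, then the term `⁅H̃_{ki}(bc,1), F̃_{ik}(a)⁆` it produces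
  have h1 := P.bracket_H_eq_add hτ hjk.symm hij.symm hik.symm hb hc (P.F i k a)
  have h2 := P.bracket_H_eq_add hτ hik.symm hij hjk.symm hbc AS.one_mem (P.F i k a)
  rw [mul_one] at h2
  rw [P.bracket_H_F_ki_eq_bracket hτ hjk.symm hij.symm hik.symm hb hc ha,
    P.bracket_H_F_ik_eq_bracket hτ hij hjk hik hb hc ha, h2,
    P.bracket_H_F_ki_eq_bracket hτ hjk.symm hij.symm hik.symm hbc AS.one_mem ha,
    P.H_eq_neg_sgn_smul_H hij.symm hbc AS.one_mem, LSt.zsmul_bracket,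
    P.bracket_H_F_ik_eq_bracket hτ hij hjk hik AS.one_mem hbc ha,
    P.bracket_F_one_F i k j hik hjk.symm hij] at h1
  have h3 := congrArg (fun v => -(sgn ((e + f) * (idxdeg m k + idxdeg m i + d)) • v)) h1
  simp only [neg_smul, smul_neg, smul_add, neg_neg, neg_add, add_zero, sgn_smul_sgn_smul,
    CharTwo.add_self_eq_zero, sgn_zero, one_smul] at h3
  rw [h3, sub_eq_add_neg]
  congr 4 <;> grind

theorem bracket_F_F_eq_bracket_F_mul_F_one (hτ : IsCentralExt τ) (hij : i ≠ j) (hjk : j ≠ k)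
    (hik : i ≠ k) (ha : a ∈ AS.grading d) (hc : c ∈ AS.grading f) :
    LSt.bracket (P.F i j a) (P.F j k c) = LSt.bracket (P.F i j (a * c)) (P.F j k 1) := by
  have h := P.bracket_F_mul_F hτ hij hjk hik ha AS.one_mem hc
  simp only [mul_one, one_mul] at h
  rw [P.bracket_F_one_F i k j hik hjk.symm hij] at h
  rw [h, add_sub_assoc, sub_eq_zero.mpr (sgn_smul_congr (by grind) _), add_zero]

theorem bracket_F_F_one (hτ : IsCentralExt τ) (hij : i ≠ j) (hjk : j ≠ k) (hik : i ≠ k)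
    (hb : b ∈ AS.grading e) : LSt.bracket (P.F i j b) (P.F j k 1) = P.F i k b := by
  have h := P.bracket_F_mul_F hτ hij hjk hik AS.one_mem hb AS.one_mem
  simp only [mul_one, one_mul] at h
  rw [add_sub_assoc, left_eq_add, sub_eq_zero, eq_comm, sgn_smul_eq_iff, sgn_smul_sgn_smul] at h
  rw [h]
  exact sgn_smul_of_eq_zero (by grind) _

theorem bracket_F_F (hτ : IsCentralExt τ) (hij : i ≠ j) (hjk : j ≠ k) (hik : i ≠ k)
    (ha : a ∈ AS.grading d) (hc : c ∈ AS.grading f) :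
    LSt.bracket (P.F i j a) (P.F j k c) = P.F i k (a * c) := by
  rw [P.bracket_F_F_eq_bracket_F_mul_F_one hτ hij hjk hik ha hc,
    P.bracket_F_F_one hτ hij hjk hik (AS.mul_mem ha hc)]

theorem bracket_H_F_ik (hτ : IsCentralExt τ) (hij : i ≠ j) (hjk : j ≠ k) (hik : i ≠ k)
    (ha : a ∈ AS.grading d) (hb : b ∈ AS.grading e) (hc : c ∈ AS.grading f) :
    LSt.bracket (P.H i j a b) (P.F i k c) = P.F i k (a * b * c) := by
  rw [P.bracket_H_F_ik_eq_bracket hτ hij hjk hik ha hb hc,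
    P.bracket_F_F hτ hij hjk hik ha (AS.mul_mem hb hc), mul_assoc]

theorem bracket_H_F_ki (hτ : IsCentralExt τ) (hij : i ≠ j) (hjk : j ≠ k) (hik : i ≠ k)
    (ha : a ∈ AS.grading d) (hb : b ∈ AS.grading e) (hc : c ∈ AS.grading f) :
    LSt.bracket (P.H i j a b) (P.F k i c) =
      -(sgn ((d + e) * (idxdeg m i + idxdeg m k + f))) • P.F k i (c * a * b) := by
  rw [P.bracket_H_F_ki_eq_bracket hτ hij hjk hik ha hb hc,
    P.bracket_F_F hτ hjk.symm hij.symm hik.symm (AS.mul_mem hc ha) hb, neg_smul]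

theorem bracket_H_F_kj (hτ : IsCentralExt τ) (hij : i ≠ j) (hjk : j ≠ k) (hik : i ≠ k)
    (ha : a ∈ AS.grading d) (hb : b ∈ AS.grading e) (hc : c ∈ AS.grading f) :
    LSt.bracket (P.H i j a b) (P.F k j c) =
      sgn ((idxdeg m i + idxdeg m j + d) * (idxdeg m i + idxdeg m j + e) +
        (d + e) * (idxdeg m j + idxdeg m k + f)) • P.F k j (c * b * a) := by
  rw [P.H_eq_neg_sgn_smul_H hij ha hb, LSt.zsmul_bracket,
    P.bracket_H_F_ki hτ hij.symm hik hjk hb ha hc, neg_smul, neg_smul, smul_neg, neg_neg,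
    sgn_smul_sgn_smul]
  exact sgn_smul_congr (by grind) _

theorem bracket_H_F_ij (hτ : IsCentralExt τ) (hij : i ≠ j) (hjk : j ≠ k) (hik : i ≠ k)
    (ha : a ∈ AS.grading d) (hb : b ∈ AS.grading e) (hc : c ∈ AS.grading f) :
    LSt.bracket (P.H i j a b) (P.F i j c) =
      P.F i j (a * b * c +
        sgn (idxdeg m i + idxdeg m j + d * e + e * f + f * d) • (c * b * a)) := by
  rw [H, LSt.bracket_bracket_of_jacobi_term_eq_zero (P.F_mem i j a hij ha)
      (P.F_mem j i b hij.symm hb) (P.F_mem i j c hij hc)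
      (P.bracket_bracket_F_F_eq_zero hτ hij hij hij.symm hij c a _),
    ← H, P.bracket_H_eq_add hτ hij.symm hik hjk hb hc,
    P.bracket_H_F_ki hτ hjk hik.symm hij.symm (AS.mul_mem hb hc) AS.one_mem ha,
    P.H_eq_neg_sgn_smul_H hik.symm hb hc, LSt.zsmul_bracket,
    P.bracket_H_F_ik hτ hik hjk.symm hij hc hb ha,
    map_add, map_zsmul, mul_one, ← mul_assoc]
  simp only [neg_smul, smul_add, smul_neg, neg_neg, neg_add, sgn_smul_sgn_smul]
  -- unlike the other sign identities, this one needs `x ^ 2 = x` for the index parities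
  have hi := ZMod.pow_card (idxdeg m i)
  have hj := ZMod.pow_card (idxdeg m j)
  have hk := ZMod.pow_card (idxdeg m k)
  congr 1
  · exact sgn_smul_of_eq_zero (by grind) _
  · exact sgn_smul_congr (by grind) _

theorem bracket_H_F_kl (hτ : IsCentralExt τ) {l : Fin (m + n)} (hij : i ≠ j) (hik : i ≠ k)
    (hil : i ≠ l) (hjk : j ≠ k) (hjl : j ≠ l) (hkl : k ≠ l)
    (ha : a ∈ AS.grading d) (hb : b ∈ AS.grading e) (hc : c ∈ AS.grading f) :
    LSt.bracket (P.H i j a b) (P.F k l c) = 0 := by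
  rw [H, LSt.bracket_bracket_of_jacobi_term_eq_zero (P.F_mem i j a hij ha)
      (P.F_mem j i b hij.symm hb) (P.F_mem k l c hkl hc)
      (P.bracket_bracket_F_F_eq_zero hτ hkl hij hil.symm hjk.symm c a _),
    P.bracket_bracket_F_F_eq_zero hτ hij.symm hkl hik hjl b c _, smul_zero, neg_zero]

end NormalizedLift

end Lift

theorem central_extension_H_identities_general
    {K A L Lt : Type*} [CommRing K] [Ring A] [Algebra K A] [AddCommGroup L] [Module K L]
    [AddCommGroup Lt] [Module K Lt]
    (AS : SuperAlgStr K A)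
    (m n : ℕ)
    -- `st(m,n,A)`
    (LS : LieSuperStr K L) (S : SteinbergFam AS LS m n)
    -- a central extension of it
    (LSt : LieSuperStr K Lt) (τ : LieSuperHom LSt LS) (hτ : IsCentralExt τ)
    -- normalized homogeneous `K`-linear preimages of the `F_{ij}(a)`
    (Ft : Fin (m + n) → Fin (m + n) → A →ₗ[K] Lt)
    (hpre : ∀ i j : Fin (m + n), i ≠ j → ∀ a : A, τ.toLin (Ft i j a) = S.F i j a)
    (hmem : ∀ {d : ZMod 2} (i j : Fin (m + n)) (a : A), i ≠ j → a ∈ AS.grading d →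
      Ft i j a ∈ LSt.grading (idxdeg m i + idxdeg m j + d))
    (hnorm : ∀ i j k : Fin (m + n), i ≠ j → j ≠ k → i ≠ k → ∀ b : A,
      LSt.bracket (Ft i k 1) (Ft k j b) = Ft i j b)
    -- the elements `H̃_{ij}(a,b) = [F̃_{ij}(a), F̃_{ji}(b)]`
    (Ht : Fin (m + n) → Fin (m + n) → A → A → Lt)
    (hHt : ∀ i j a b, Ht i j a b = LSt.bracket (Ft i j a) (Ft j i b)) :
    ∀ (d e f : ZMod 2) (a b c : A),
      a ∈ AS.grading d → b ∈ AS.grading e → c ∈ AS.grading f →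
      ∀ i j k l : Fin (m + n), i ≠ j → i ≠ k → i ≠ l → j ≠ k → j ≠ l → k ≠ l →
      -- (1)
      (Ht i j a b =
        -(sgn ((idxdeg m i + idxdeg m j + d) * (idxdeg m i + idxdeg m j + e))) • Ht j i b a) ∧
      -- (2)
      (LSt.bracket (Ht i j a b) (Ft i k c) = Ft i k (a * b * c)) ∧
      -- (3)
      (LSt.bracket (Ht i j a b) (Ft k i c) =
        -(sgn ((d + e) * (idxdeg m i + idxdeg m k + f))) • Ft k i (c * a * b)) ∧
      -- (4)
      (LSt.bracket (Ht i j a b) (Ft k j c) =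
        sgn ((idxdeg m i + idxdeg m j + d) * (idxdeg m i + idxdeg m j + e) +
          (d + e) * (idxdeg m j + idxdeg m k + f)) • Ft k j (c * b * a)) ∧
      -- (5)
      (LSt.bracket (Ht i j a b) (Ft i j c) =
        Ft i j (a * b * c +
          sgn (idxdeg m i + idxdeg m j + d * e + e * f + f * d) • (c * b * a))) ∧
      -- (6)
      (LSt.bracket (Ht i j a b) (Ft k l c) = 0) := by
  intro d e f a b c ha hb hc i j k l hij hik hil hjk hjl hkl
  let P : NormalizedLift S τ := ⟨Ft, hpre, hmem, hnorm⟩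
  simp only [hHt]
  exact ⟨P.H_eq_neg_sgn_smul_H hij ha hb, P.bracket_H_F_ik hτ hij hjk hik ha hb hc,
    P.bracket_H_F_ki hτ hij hjk hik ha hb hc,
    P.bracket_H_F_kj hτ hij hjk hik ha hb hc, P.bracket_H_F_ij hτ hij hjk hik ha hb hc,
    P.bracket_H_F_kl hτ hij hik hil hjk hjl hkl ha hb hc⟩

/-- in any central extension `τ : L̃ → st(m,n,A)` with normalized homogeneous
preimages `F̃_{ij}(a)`, the elements `H̃_{ij}(a,b) = [F̃_{ij}(a), F̃_{ji}(b)]` satisfy the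
analogues of the identities of Lemma 2.1. -/
theorem central_extension_H_identities
    {K A L Lt : Type*} [CommRing K] [Ring A] [Algebra K A] [AddCommGroup L] [Module K L]
    [AddCommGroup Lt] [Module K Lt]
    (AS : SuperAlgStr K A) (hfree : HasBasisContainingOne (K := K) A)
    (m n : ℕ) (hmn : 3 ≤ m + n)
    -- `st(m,n,A)`
    (LS : LieSuperStr K L) (S : SteinbergFam AS LS m n)
    (hgen : S.Generates) (hinit : S.IsInitial)
    -- a central extension of it
    (LSt : LieSuperStr K Lt) (τ : LieSuperHom LSt LS) (hτ : IsCentralExt τ)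
    -- normalized homogeneous `K`-linear preimages of the `F_{ij}(a)`
    (Ft : Fin (m + n) → Fin (m + n) → A →ₗ[K] Lt)
    (hpre : ∀ i j : Fin (m + n), i ≠ j → ∀ a : A, τ.toLin (Ft i j a) = S.F i j a)
    (hmem : ∀ {d : ZMod 2} (i j : Fin (m + n)) (a : A), i ≠ j → a ∈ AS.grading d →
      Ft i j a ∈ LSt.grading (idxdeg m i + idxdeg m j + d))
    (hnorm : ∀ i j k : Fin (m + n), i ≠ j → j ≠ k → i ≠ k → ∀ b : A,
      LSt.bracket (Ft i k 1) (Ft k j b) = Ft i j b)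
    -- the elements `H̃_{ij}(a,b) = [F̃_{ij}(a), F̃_{ji}(b)]`
    (Ht : Fin (m + n) → Fin (m + n) → A → A → Lt)
    (hHt : ∀ i j a b, Ht i j a b = LSt.bracket (Ft i j a) (Ft j i b)) :
    ∀ (d e f : ZMod 2) (a b c : A),
      a ∈ AS.grading d → b ∈ AS.grading e → c ∈ AS.grading f →
      ∀ i j k l : Fin (m + n), i ≠ j → i ≠ k → i ≠ l → j ≠ k → j ≠ l → k ≠ l →
      -- (1)
      (Ht i j a b =
        -(sgn ((idxdeg m i + idxdeg m j + d) * (idxdeg m i + idxdeg m j + e))) • Ht j i b a) ∧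
      -- (2)
      (LSt.bracket (Ht i j a b) (Ft i k c) = Ft i k (a * b * c)) ∧
      -- (3)
      (LSt.bracket (Ht i j a b) (Ft k i c) =
        -(sgn ((d + e) * (idxdeg m i + idxdeg m k + f))) • Ft k i (c * a * b)) ∧
      -- (4)
      (LSt.bracket (Ht i j a b) (Ft k j c) =
        sgn ((idxdeg m i + idxdeg m j + d) * (idxdeg m i + idxdeg m j + e) +
          (d + e) * (idxdeg m j + idxdeg m k + f)) • Ft k j (c * b * a)) ∧
      -- (5)
      (LSt.bracket (Ht i j a b) (Ft i j c) =
        Ft i j (a * b * c +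
          sgn (idxdeg m i + idxdeg m j + d * e + e * f + f * d) • (c * b * a))) ∧
      -- (6)
      (LSt.bracket (Ht i j a b) (Ft k l c) = 0) :=
  central_extension_H_identities_general AS m n LS S LSt τ hτ Ft hpre hmem hnorm Ht hHt
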